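/- Let q = 2^r with r ≥ 1. The set of roots in 𝔽_q of T_{q-1} is {0} ∪ {z ∈ 𝔽_q^× : Tr_{𝔽_q/𝔽₂}(z⁻¹) = 0} and the set of roots of T_{q+1} in 𝔽_q is {0} ∪ {z ∈ 𝔽_q^× : Tr_{𝔽_q/𝔽₂}(z⁻¹) = 1}; consequently these two root sets have union 𝔽_q, intersection {0}, and cardinalities q/2 and q/2 + 1 respectively. -/
import Mathlib

open Polynomial Finset

/-- The Chebyshev-Dickson polynomials of the first kind over 𝔽₂. -/
noncomputable def Cheb2 : ℕ → Polynomial (ZMod 2)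
  | 0 => 0
  | 1 => X
  | n + 2 => X * Cheb2 (n + 1) + Cheb2 n

lemma two_poly : (2 : Polynomial (ZMod 2)) = 0 := by
  have : ((2:ℕ) : Polynomial (ZMod 2)) = 0 := CharP.cast_eq_zero _ 2
  simpa using this

lemma cheb2_catalan (n : ℕ) : Cheb2 (n+2) * Cheb2 n = Cheb2 (n+1)^2 + X^2 := by
  induction n with
  | zero =>
      show Cheb2 2 * Cheb2 0 = Cheb2 1 ^ 2 + X ^ 2
      simp only [Cheb2]
      linear_combination -(X:Polynomial (ZMod 2))^2 * two_poly
  | succ n ih =>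
      show Cheb2 (n+3) * Cheb2 (n+1) = Cheb2 (n+2) ^ 2 + X ^ 2
      have e3 : Cheb2 (n+3) = X * Cheb2 (n+2) + Cheb2 (n+1) := rfl
      have e2 : Cheb2 (n+2) = X * Cheb2 (n+1) + Cheb2 n := rfl
      rw [e2] at ih
      rw [e3, e2]
      linear_combination -ih - X^2 * two_poly

lemma cheb2_double (n : ℕ) :
    Cheb2 (2*n) = Cheb2 n ^ 2 ∧ Cheb2 (2*n+1) = Cheb2 (n+1) * Cheb2 n + X := by
  induction n with
  | zero =>
      constructor
      · show Cheb2 0 = Cheb2 0 ^ 2; simp [Cheb2]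
      · show Cheb2 1 = Cheb2 1 * Cheb2 0 + X; simp [Cheb2]
  | succ n ih =>
      obtain ⟨h1, h2⟩ := ih
      have cat := cheb2_catalan n
      have e2 : Cheb2 (n+2) = X * Cheb2 (n+1) + Cheb2 n := rfl
      have d2 : Cheb2 (2*(n+1)) = X * Cheb2 (2*n+1) + Cheb2 (2*n) := by
        rw [show 2*(n+1) = 2*n+2 by ring]; rfl
      have d3 : Cheb2 (2*(n+1)+1) = X * Cheb2 (2*(n+1)) + Cheb2 (2*n+1) := by
        rw [show 2*(n+1)+1 = 2*n+1+2 by ring, show 2*(n+1) = 2*n+1+1 by ring]; rfl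
      have g1 : Cheb2 (2*(n+1)) = Cheb2 (n+1) ^ 2 := by
        rw [d2, h1, h2]
        rw [e2] at cat
        linear_combination cat + X^2 * two_poly
      refine ⟨g1, ?_⟩
      rw [d3, g1, h2, e2]
      ring

lemma cheb2_pow (k : ℕ) : Cheb2 (2^k) = X ^ (2^k) := by
  induction k with
  | zero => simp [Cheb2]
  | succ k ih =>
      rw [pow_succ, mul_comm, (cheb2_double (2^k)).1, ih, ← pow_mul, mul_comm]

/-- The auxiliary polynomial `∑ i < r, X^(2^(r-1) - 2^i)`. -/
noncomputable def Mp (r : ℕ) : Polynomial (ZMod 2) := ∑ i ∈ range r, X^(2^(r-1) - 2^i)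

lemma Mp_succ (r : ℕ) (hr : 1 ≤ r) : Mp (r+1) = X^(2^(r-1)) * Mp r + 1 := by
  unfold Mp
  rw [Finset.sum_range_succ, Finset.mul_sum]
  rw [Nat.add_sub_cancel, Nat.sub_self, pow_zero]
  congr 1
  apply Finset.sum_congr rfl
  intro i hi
  rw [← pow_add]
  congr 1
  have h1 : 2^i ≤ 2^(r-1) :=
    Nat.pow_le_pow_right (by norm_num) (by have := Finset.mem_range.mp hi; omega)
  have h2 : 2^(r-1) + 2^(r-1) = 2^r := by
    rw [← two_mul, ← pow_succ']
    congr 1; omega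
  rw [← Nat.add_sub_assoc h1, h2]

lemma cheb2_sub_one_step (r : ℕ) :
    Cheb2 (2^(r+1) - 1) = X^(2^r) * Cheb2 (2^r - 1) + X := by
  have h : 2^(r+1) - 1 = 2*(2^r - 1) + 1 := by
    have : 1 ≤ 2^r := Nat.one_le_two_pow
    rw [pow_succ]; omega
  rw [h, (cheb2_double (2^r - 1)).2, show 2^r - 1 + 1 = 2^r by
    have : 1 ≤ 2^r := Nat.one_le_two_pow; omega, cheb2_pow]

lemma cheb2_add_one_step (r : ℕ) :
    Cheb2 (2^(r+1) + 1) = Cheb2 (2^r + 1) * X^(2^r) + X := by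
  have h : 2^(r+1) + 1 = 2*(2^r) + 1 := by rw [pow_succ]; ring
  rw [h, (cheb2_double (2^r)).2, cheb2_pow]

lemma chebM (r : ℕ) (hr : 1 ≤ r) : Cheb2 (2^r - 1) = X * (Mp r)^2 := by
  induction r, hr using Nat.le_induction with
  | base =>
      show Cheb2 1 = _
      unfold Mp
      norm_num [Cheb2]
  | succ r hr ih =>
      rw [cheb2_sub_one_step r, ih, Mp_succ r hr, CharTwo.add_sq, mul_pow, one_pow,
        ← pow_mul]
      have : 2^(r-1) * 2 = 2^r := by
        rw [mul_comm, ← pow_succ']; congr 1; omega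
      rw [this]
      ring

lemma chebN (r : ℕ) (hr : 1 ≤ r) :
    Cheb2 (2^r + 1) = X * (X^(2^(r-1)) + Mp r)^2 := by
  induction r, hr using Nat.le_induction with
  | base =>
      show Cheb2 3 = _
      unfold Mp
      norm_num [Cheb2]
      linear_combination -(X:Polynomial (ZMod 2))^2*two_poly
  | succ r hr ih =>
      rw [cheb2_add_one_step r, ih, Nat.add_sub_cancel]
      have e : 2^(r-1)*2 = 2^r := by
        rw [mul_comm, ← pow_succ']; congr 1; omega
      rw [Mp_succ r hr, CharTwo.add_sq (X^(2^(r-1))) (Mp r),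
        CharTwo.add_sq (X^(2^r)), CharTwo.add_sq (X^(2^(r-1)) * Mp r) 1,
        mul_pow, ← pow_mul, e]
      ring

section Field

variable (r : ℕ)

lemma gf_card (hr : 1 ≤ r) :
    letI : Fintype (GaloisField 2 r) := Fintype.ofFinite _
    Fintype.card (GaloisField 2 r) = 2 ^ r := by
  letI : Fintype (GaloisField 2 r) := Fintype.ofFinite _
  have h := GaloisField.card 2 r (by omega)
  rw [Nat.card_eq_fintype_card] at h
  exact h

lemma gf_pow_card (hr : 1 ≤ r) (z : GaloisField 2 r) : z ^ (2^r) = z := by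
  letI : Fintype (GaloisField 2 r) := Fintype.ofFinite _
  rw [← gf_card r hr]
  exact FiniteField.pow_card z

lemma tr_zero (hr : 1 ≤ r) : ∑ i ∈ range r, (0 : GaloisField 2 r) ^ (2^i) = 0 := by
  apply Finset.sum_eq_zero
  intro i _
  exact zero_pow (by positivity)

lemma tr_sq (hr : 1 ≤ r) (w : GaloisField 2 r) :
    (∑ i ∈ range r, w ^ (2^i))^2 = ∑ i ∈ range r, w ^ (2^i) := by
  rw [sum_pow_char]
  have h0 : ∀ i ∈ range r, (w^(2^i))^2 = w^(2^(i+1)) := by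
    intro i _; rw [← pow_mul, pow_succ]
  rw [Finset.sum_congr rfl h0]
  have h1 := Finset.sum_range_succ (fun i => w^(2^i)) r
  have h2 := Finset.sum_range_succ' (fun i => w^(2^i)) r
  rw [gf_pow_card r hr] at h1
  rw [pow_zero, pow_one] at h2
  have h3 := h1.symm.trans h2
  exact (add_right_cancel h3).symm

lemma tr_dichotomy (hr : 1 ≤ r) (w : GaloisField 2 r) :
    (∑ i ∈ range r, w ^ (2^i)) = 0 ∨ (∑ i ∈ range r, w ^ (2^i)) = 1 := by
  have h := tr_sq r hr w
  have : (∑ i ∈ range r, w ^ (2^i)) * ((∑ i ∈ range r, w ^ (2^i)) - 1) = 0 := by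
    linear_combination h
  rcases mul_eq_zero.mp this with h' | h'
  · exact Or.inl h'
  · exact Or.inr (sub_eq_zero.mp h')

lemma aeval_Mp (hr : 1 ≤ r) (z : GaloisField 2 r) (hz : z ≠ 0) :
    aeval z (Mp r) = z^(2^(r-1)) * ∑ i ∈ range r, (z⁻¹)^(2^i) := by
  unfold Mp
  rw [map_sum, Finset.mul_sum]
  refine Finset.sum_congr rfl fun i hi => ?_
  have h1 : 2^i ≤ 2^(r-1) :=
    Nat.pow_le_pow_right (by norm_num) (by have := Finset.mem_range.mp hi; omega)
  rw [map_pow, aeval_X, pow_sub₀ z hz h1, inv_pow]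

lemma root_iff_sub (hr : 1 ≤ r) (z : GaloisField 2 r) :
    aeval z (Cheb2 (2^r - 1)) = 0 ↔
      z = 0 ∨ (z ≠ 0 ∧ ∑ i ∈ range r, (z⁻¹)^(2^i) = 0) := by
  rw [chebM r hr, map_mul, map_pow, aeval_X]
  by_cases hz : z = 0
  · simp [hz]
  · rw [aeval_Mp r hr z hz, mul_pow, mul_eq_zero, mul_eq_zero]
    have hzp : z^(2^(r-1)) ≠ 0 := pow_ne_zero _ hz
    constructor
    · rintro (h | h | h)
      · exact absurd h hz
      · exact absurd (pow_eq_zero_iff two_ne_zero |>.mp h) hzp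
      · exact Or.inr ⟨hz, pow_eq_zero_iff two_ne_zero |>.mp h⟩
    · rintro (h | ⟨-, h⟩)
      · exact absurd h hz
      · exact Or.inr (Or.inr (by rw [h]; ring))

lemma root_iff_add (hr : 1 ≤ r) (z : GaloisField 2 r) :
    aeval z (Cheb2 (2^r + 1)) = 0 ↔
      z = 0 ∨ (z ≠ 0 ∧ ∑ i ∈ range r, (z⁻¹)^(2^i) = 1) := by
  rw [chebN r hr, map_mul, map_pow, aeval_X]
  by_cases hz : z = 0
  · simp [hz]
  · rw [map_add, map_pow, aeval_X, aeval_Mp r hr z hz]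
    have key : z^(2^(r-1)) + z^(2^(r-1)) * ∑ i ∈ range r, (z⁻¹)^(2^i)
        = z^(2^(r-1)) * (1 + ∑ i ∈ range r, (z⁻¹)^(2^i)) := by ring
    rw [key, mul_pow, mul_eq_zero, mul_eq_zero]
    have hzp : z^(2^(r-1)) ≠ 0 := pow_ne_zero _ hz
    constructor
    · rintro (h | h | h)
      · exact absurd h hz
      · exact absurd (pow_eq_zero_iff two_ne_zero |>.mp h) hzp
      · refine Or.inr ⟨hz, ?_⟩
        have h' := pow_eq_zero_iff two_ne_zero |>.mp h
        linear_combination h' - CharTwo.two_eq_zero (R := GaloisField 2 r)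
    · rintro (h | ⟨-, h⟩)
      · exact absurd h hz
      · refine Or.inr (Or.inr ?_)
        rw [h]
        have h2 : (1 : GaloisField 2 r) + 1 = 0 := CharTwo.add_self_eq_zero 1
        rw [h2]
        ring

end Field

section Count

variable (r : ℕ)

lemma ncard_le_of_roots {F : Type*} [Field F] [Finite F] (p : Polynomial F) (hp : p ≠ 0)
    (n : ℕ) (hdeg : p.natDegree ≤ n) (s : Set F) (hs : ∀ z ∈ s, Polynomial.eval z p = 0) :
    s.ncard ≤ n := by
  have hfin : s.Finite := Set.toFinite s
  rw [Set.ncard_eq_toFinset_card s hfin]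
  refine le_trans (Polynomial.card_le_degree_of_subset_roots ?_) hdeg
  intro z hz
  have hz' : z ∈ s := hfin.mem_toFinset.mp (Finset.mem_val.mp hz)
  exact (Polynomial.mem_roots hp).mpr (hs z hz')

lemma card_trace_sets (hr : 1 ≤ r) :
    {z : GaloisField 2 r | ∑ i ∈ range r, z ^ (2^i) = 0}.ncard = 2^(r-1) ∧
    {z : GaloisField 2 r | ∑ i ∈ range r, z ^ (2^i) = 1}.ncard = 2^(r-1) := by
  set L : Polynomial (GaloisField 2 r) := ∑ i ∈ range r, X^(2^i) with hL
  have evalL : ∀ z : GaloisField 2 r, eval z L = ∑ i ∈ range r, z^(2^i) := by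
    intro z; rw [hL, eval_finset_sum]; simp
  have hcoeff : L.coeff (2^(r-1)) = 1 := by
    rw [hL, finset_sum_coeff]
    have h2 : ∀ i ∈ range r, ((X : Polynomial (GaloisField 2 r))^(2^i)).coeff (2^(r-1)) =
        if i = r - 1 then 1 else 0 := by
      intro i hi
      have hiff : (2 ^ (r-1) = 2 ^ i) ↔ (i = r - 1) := by
        constructor
        · intro h'; exact (Nat.pow_right_injective (le_refl 2) h').symm
        · intro h'; rw [h']
      rw [coeff_X_pow, if_congr hiff rfl rfl]
    rw [Finset.sum_congr rfl h2, Finset.sum_ite_eq' (range r) (r-1) (fun _ => (1 : GaloisField 2 r))]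
    simp only [mem_range, if_pos (by omega : r - 1 < r)]
  have hdeg : L.natDegree ≤ 2^(r-1) := by
    apply Polynomial.natDegree_sum_le_of_forall_le
    intro i hi
    rw [natDegree_X_pow]
    exact Nat.pow_le_pow_right (by norm_num) (by have := mem_range.mp hi; omega)
  have hL0 : L ≠ 0 := by
    intro h; rw [h] at hcoeff; simp at hcoeff
  have hcoeff1 : (L + 1).coeff (2^(r-1)) = 1 := by
    rw [coeff_add, hcoeff, Polynomial.coeff_one,
      if_neg (show ¬((2:ℕ)^(r-1) = 0) by positivity), add_zero]
  have hL10 : L + 1 ≠ 0 := by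
    intro h; rw [h] at hcoeff1; simp at hcoeff1
  have hdeg1 : (L + 1).natDegree ≤ 2^(r-1) := by
    refine le_trans (Polynomial.natDegree_add_le _ _) ?_
    simp [hdeg]
  have bA : {z : GaloisField 2 r | ∑ i ∈ range r, z ^ (2^i) = 0}.ncard ≤ 2^(r-1) := by
    apply ncard_le_of_roots L hL0 _ hdeg
    intro z hz; rw [evalL]; exact hz
  have bB : {z : GaloisField 2 r | ∑ i ∈ range r, z ^ (2^i) = 1}.ncard ≤ 2^(r-1) := by
    apply ncard_le_of_roots (L + 1) hL10 _ hdeg1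
    intro z hz
    rw [eval_add, evalL, eval_one, hz]
    exact CharTwo.add_self_eq_zero 1
  have hsum : {z : GaloisField 2 r | ∑ i ∈ range r, z ^ (2^i) = 0}.ncard +
      {z : GaloisField 2 r | ∑ i ∈ range r, z ^ (2^i) = 1}.ncard = 2^r := by
    rw [← Set.ncard_union_eq ?dis (Set.toFinite _) (Set.toFinite _)]
    case dis =>
      rw [Set.disjoint_left]
      rintro z h0 h1
      rw [Set.mem_setOf_eq] at h0 h1
      exact one_ne_zero (h1 ▸ h0)
    have huniv : {z : GaloisField 2 r | ∑ i ∈ range r, z ^ (2^i) = 0} ∪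
        {z : GaloisField 2 r | ∑ i ∈ range r, z ^ (2^i) = 1} = Set.univ := by
      ext z
      simp only [Set.mem_union, Set.mem_setOf_eq, Set.mem_univ, iff_true]
      exact tr_dichotomy r hr z
    rw [huniv, Set.ncard_univ, GaloisField.card 2 r (by omega)]
  have hpow : 2^(r-1) + 2^(r-1) = 2^r := by
    rw [← two_mul, ← pow_succ']; congr 1; omega
  omega

end Count

theorem cheb2_roots_trace (r : ℕ) (hr : 1 ≤ r) :
    {z : GaloisField 2 r | aeval z (Cheb2 (2 ^ r - 1)) = 0} =
      {0} ∪ {z : GaloisField 2 r | z ≠ 0 ∧ ∑ i ∈ Finset.range r, z⁻¹ ^ (2 ^ i) = 0} ∧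
    {z : GaloisField 2 r | aeval z (Cheb2 (2 ^ r + 1)) = 0} =
      {0} ∪ {z : GaloisField 2 r | z ≠ 0 ∧ ∑ i ∈ Finset.range r, z⁻¹ ^ (2 ^ i) = 1} ∧
    {z : GaloisField 2 r | aeval z (Cheb2 (2 ^ r - 1)) = 0} ∪
      {z : GaloisField 2 r | aeval z (Cheb2 (2 ^ r + 1)) = 0} = Set.univ ∧
    {z : GaloisField 2 r | aeval z (Cheb2 (2 ^ r - 1)) = 0} ∩
      {z : GaloisField 2 r | aeval z (Cheb2 (2 ^ r + 1)) = 0} = {0} ∧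
    {z : GaloisField 2 r | aeval z (Cheb2 (2 ^ r - 1)) = 0}.ncard = 2 ^ r / 2 ∧
    {z : GaloisField 2 r | aeval z (Cheb2 (2 ^ r + 1)) = 0}.ncard = 2 ^ r / 2 + 1 := by
  have hpow : 2^(r-1) + 2^(r-1) = 2^r := by
    rw [← two_mul, ← pow_succ']; congr 1; omega
  have hone : 1 ≤ 2^(r-1) := Nat.one_le_two_pow
  obtain ⟨cA, cB⟩ := card_trace_sets r hr
  have e1 : {z : GaloisField 2 r | aeval z (Cheb2 (2 ^ r - 1)) = 0} =
      {0} ∪ {z : GaloisField 2 r | z ≠ 0 ∧ ∑ i ∈ Finset.range r, z⁻¹ ^ (2 ^ i) = 0} := by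
    ext z
    rw [Set.mem_setOf_eq, Set.mem_union, Set.mem_singleton_iff, Set.mem_setOf_eq]
    exact root_iff_sub r hr z
  have e2 : {z : GaloisField 2 r | aeval z (Cheb2 (2 ^ r + 1)) = 0} =
      {0} ∪ {z : GaloisField 2 r | z ≠ 0 ∧ ∑ i ∈ Finset.range r, z⁻¹ ^ (2 ^ i) = 1} := by
    ext z
    rw [Set.mem_setOf_eq, Set.mem_union, Set.mem_singleton_iff, Set.mem_setOf_eq]
    exact root_iff_add r hr z
  refine ⟨e1, e2, ?_, ?_, ?_, ?_⟩
  · ext z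
    simp only [Set.mem_union, Set.mem_setOf_eq, Set.mem_univ, iff_true]
    by_cases hz : z = 0
    · exact Or.inl ((root_iff_sub r hr z).mpr (Or.inl hz))
    · rcases tr_dichotomy r hr z⁻¹ with h | h
      · exact Or.inl ((root_iff_sub r hr z).mpr (Or.inr ⟨hz, h⟩))
      · exact Or.inr ((root_iff_add r hr z).mpr (Or.inr ⟨hz, h⟩))
  · ext z
    simp only [Set.mem_inter_iff, Set.mem_setOf_eq, Set.mem_singleton_iff]
    constructor
    · rintro ⟨h1, h2⟩
      rcases (root_iff_sub r hr z).mp h1 with h | ⟨hz, ht0⟩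
      · exact h
      rcases (root_iff_add r hr z).mp h2 with h | ⟨-, ht1⟩
      · exact h
      exact absurd (ht0.symm.trans ht1) zero_ne_one
    · intro h
      subst h
      exact ⟨(root_iff_sub r hr 0).mpr (Or.inl rfl), (root_iff_add r hr 0).mpr (Or.inl rfl)⟩
  · rw [e1]
    have h0 : (0 : GaloisField 2 r) ∉
        {z : GaloisField 2 r | z ≠ 0 ∧ ∑ i ∈ Finset.range r, z⁻¹ ^ (2 ^ i) = 0} := by
      simp
    have himg : {z : GaloisField 2 r | z ≠ 0 ∧ ∑ i ∈ Finset.range r, z⁻¹ ^ (2 ^ i) = 0}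
        = (fun z : GaloisField 2 r => z⁻¹) ''
          ({z : GaloisField 2 r | ∑ i ∈ Finset.range r, z ^ (2^i) = 0} \ {0}) := by
      ext w
      simp only [Set.mem_image, Set.mem_diff, Set.mem_setOf_eq, Set.mem_singleton_iff]
      constructor
      · rintro ⟨hw, ht⟩
        exact ⟨w⁻¹, ⟨ht, inv_ne_zero hw⟩, inv_inv w⟩
      · rintro ⟨z, ⟨ht, hz⟩, rfl⟩
        refine ⟨inv_ne_zero hz, ?_⟩
        rw [inv_inv]; exact ht
    rw [Set.ncard_union_eq (Set.disjoint_singleton_left.mpr h0)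
        (Set.toFinite _) (Set.toFinite _), Set.ncard_singleton, himg,
      Set.ncard_image_of_injective _ inv_injective]
    have hmem : (0 : GaloisField 2 r) ∈
        {z : GaloisField 2 r | ∑ i ∈ Finset.range r, z ^ (2^i) = 0} := tr_zero r hr
    rw [Set.ncard_diff_singleton_of_mem hmem, cA]
    omega
  · rw [e2]
    have h0 : (0 : GaloisField 2 r) ∉
        {z : GaloisField 2 r | z ≠ 0 ∧ ∑ i ∈ Finset.range r, z⁻¹ ^ (2 ^ i) = 1} := by
      simp
    have himg : {z : GaloisField 2 r | z ≠ 0 ∧ ∑ i ∈ Finset.range r, z⁻¹ ^ (2 ^ i) = 1}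
        = (fun z : GaloisField 2 r => z⁻¹) ''
          {z : GaloisField 2 r | ∑ i ∈ Finset.range r, z ^ (2^i) = 1} := by
      ext w
      simp only [Set.mem_image, Set.mem_setOf_eq]
      constructor
      · rintro ⟨hw, ht⟩
        exact ⟨w⁻¹, ht, inv_inv w⟩
      · rintro ⟨z, ht, rfl⟩
        have hz : z ≠ 0 := by
          rintro rfl
          rw [tr_zero r hr] at ht
          exact zero_ne_one ht
        refine ⟨inv_ne_zero hz, ?_⟩
        rw [inv_inv]; exact ht
    rw [Set.ncard_union_eq (Set.disjoint_singleton_left.mpr h0)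
        (Set.toFinite _) (Set.toFinite _), Set.ncard_singleton, himg,
      Set.ncard_image_of_injective _ inv_injective, cB]
    omega
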